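/- arXiv:2306.03349 — 2 statements merged into one kernel-verified Lean document; each statement's English description precedes it below -/
import Mathlib

section
/- Let Ω = (a,b) × Ω₁ ⊂ ℝⁿ with 0 ≤ a < b and Ω₁ a bounded box in ℝ^{n−1}, T > 0, Q_T = Ω×(0,T). Let Y(x,y) = H(y₁−x₁) Ȳ(x,y) where H is the Heaviside function and Ȳ ∈ L^∞(Ω×Ω) with ‖Ȳ‖_∞ ≤ N₁, and let φ_λ(x₁,t) = exp(2λ(x₁² − α(t−T/2)²)). Then there exists C̃ = C̃(N₁,Q_T) > 0 such that for all h ∈ L²(Q_T) and all λ > 0: ∫_{Q_T} ( ∫_Ω Y(x,y) h(y,t) dy )² φ_λ(x₁,t) dx dt ≤ C̃ ∫_{Q_T} h² φ_λ dx dt. -/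
open MeasureTheory ENNReal

/-- The Heaviside function. -/
noncomputable def heaviside (z : ℝ) : ℝ := if 0 < z then 1 else 0

lemma heaviside_nonneg (z : ℝ) : 0 ≤ heaviside z := by
  unfold heaviside; split_ifs <;> norm_num

lemma heaviside_sq (z : ℝ) : heaviside z ^ 2 = heaviside z := by
  unfold heaviside; split_ifs <;> norm_num

lemma measurable_heaviside : Measurable heaviside := by
  unfold heaviside
  exact Measurable.ite (measurableSet_lt measurable_const measurable_id)
    measurable_const measurable_const

lemma lintegral_sq_le {α : Type*} [MeasurableSpace α] (ν : Measure α)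
    (f : α → ℝ≥0∞) (hf : AEMeasurable f ν) :
    (∫⁻ a, f a ∂ν) ^ 2 ≤ (∫⁻ a, f a ^ 2 ∂ν) * ν Set.univ := by
  have hpq : Real.HolderConjugate 2 2 := Real.holderConjugate_iff.2 ⟨one_lt_two, by norm_num⟩
  have h := ENNReal.lintegral_mul_le_Lp_mul_Lq ν hpq hf (aemeasurable_const (b := (1:ℝ≥0∞)))
  simp only [Pi.mul_apply, mul_one, ENNReal.one_rpow, lintegral_const, one_mul] at h
  have h2 := ENNReal.rpow_le_rpow h (by norm_num : (0:ℝ) ≤ 2)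
  calc (∫⁻ a, f a ∂ν) ^ 2 = (∫⁻ a, f a ∂ν) ^ (2:ℝ) := by
        rw [← ENNReal.rpow_natCast]; norm_num
    _ ≤ ((∫⁻ a, f a ^ (2:ℝ) ∂ν) ^ (1/2 : ℝ) * (ν Set.univ) ^ (1/2:ℝ)) ^ (2:ℝ) := h2
    _ = (∫⁻ a, f a ^ 2 ∂ν) * ν Set.univ := by
        rw [ENNReal.mul_rpow_of_nonneg _ _ (by norm_num : (0:ℝ) ≤ 2),
          ← ENNReal.rpow_mul, ← ENNReal.rpow_mul]
        norm_num

lemma aux_lemma_3_2 (k : ℕ) (a b N₁ T : ℝ) (ha : 0 ≤ a) (hab : a < b) (hN₁ : 0 < N₁)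
    (B : Fin k → ℝ)
    (w : ℝ → ℝ → ℝ)
    (hwm : Measurable fun z : ℝ × ℝ => w z.1 z.2)
    (hw_pos : ∀ x t, 0 < w x t)
    (hw_mono : ∀ x y t, x ∈ Set.Ioo a b → x ≤ y → w x t ≤ w y t)
    (W : ℝ) (hw_bdd : ∀ x t, x ∈ Set.Ioo a b → w x t ≤ W)
    (Ybar : (ℝ × (Fin k → ℝ)) → (ℝ × (Fin k → ℝ)) → ℝ)
    (hYm : Measurable (Function.uncurry Ybar))
    (hYb : ∀ x y, |Ybar x y| ≤ N₁)
    (h : ℝ × (Fin k → ℝ) × ℝ → ℝ)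
    (hh : MemLp h 2 (volume.restrict
      (Set.Ioo a b ×ˢ (Set.univ.pi fun i => Set.Ioo (-(B i)) (B i)) ×ˢ Set.Ioo 0 T))) :
    (∫ p in Set.Ioo a b ×ˢ (Set.univ.pi fun i => Set.Ioo (-(B i)) (B i)) ×ˢ Set.Ioo 0 T,
        (∫ y in Set.Ioo a b ×ˢ (Set.univ.pi fun i => Set.Ioo (-(B i)) (B i)),
            heaviside (y.1 - p.1) * Ybar (p.1, p.2.1) y * h (y.1, y.2, p.2.2)) ^ 2
          * w p.1 p.2.2)
      ≤ (N₁ ^ 2 *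
          (volume (Set.Ioo a b ×ˢ (Set.univ.pi fun i => Set.Ioo (-(B i)) (B i)))).toReal ^ 2) *
        ∫ p in Set.Ioo a b ×ˢ (Set.univ.pi fun i => Set.Ioo (-(B i)) (B i)) ×ˢ Set.Ioo 0 T,
          (h p) ^ 2 * w p.1 p.2.2 := by
  classical
  set Ω₁ : Set (Fin k → ℝ) := Set.univ.pi fun i => Set.Ioo (-(B i)) (B i) with hΩ₁def
  set S : Set (ℝ × (Fin k → ℝ)) := Set.Ioo a b ×ˢ Ω₁ with hSdef
  set Q : Set (ℝ × (Fin k → ℝ) × ℝ) := Set.Ioo a b ×ˢ Ω₁ ×ˢ Set.Ioo 0 T with hQdef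
  have hΩ₁m : MeasurableSet Ω₁ := MeasurableSet.univ_pi fun i => measurableSet_Ioo
  have hSm : MeasurableSet S := measurableSet_Ioo.prod hΩ₁m
  have hQm : MeasurableSet Q := measurableSet_Ioo.prod (hΩ₁m.prod measurableSet_Ioo)
  set μ := volume.restrict Q with hμdef
  set ν := volume.restrict S with hνdef
  -- measurable representative of h
  obtain ⟨g, hgsm, hfg⟩ := hh.1
  have hgm : Measurable g := hgsm.measurable
  have hgl2 : MemLp g 2 μ := hh.ae_eq hfg
  set we : ℝ → ℝ → ℝ≥0∞ := fun x t => ENNReal.ofReal (w x t) with hwedef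
  set vS : ℝ≥0∞ := volume S with hvSdef
  have hvS_ne_top : vS ≠ ∞ := by
    rw [hvSdef, hSdef, Measure.volume_eq_prod, Measure.prod_prod, hΩ₁def, volume_pi_pi]
    exact ENNReal.mul_ne_top (by simp [Real.volume_Ioo])
      (ENNReal.prod_lt_top fun i _ => by simp [Real.volume_Ioo]).ne
  have hwem : Measurable fun z : ℝ × ℝ => we z.1 z.2 :=
    ENNReal.measurable_ofReal.comp hwm
  have hGm : Measurable fun p : ℝ × (Fin k → ℝ) × ℝ =>
      (ENNReal.ofReal |g p|) ^ 2 * we p.1 p.2.2 :=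
    ((ENNReal.measurable_ofReal.comp hgm.abs).pow_const 2).mul
      (hwem.comp (measurable_fst.prodMk measurable_snd.snd))
  have hFm : Measurable fun z : (ℝ × (Fin k → ℝ) × ℝ) × ℝ × (Fin k → ℝ) =>
      heaviside (z.2.1 - z.1.1) * Ybar (z.1.1, z.1.2.1) z.2 * g (z.2.1, z.2.2, z.1.2.2) := by
    apply Measurable.mul
    apply Measurable.mul
    · exact measurable_heaviside.comp (measurable_snd.fst.sub measurable_fst.fst)
    · exact hYm.comp ((measurable_fst.fst.prodMk measurable_fst.snd.fst).prodMk measurable_snd)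
    · exact hgm.comp
        (measurable_snd.fst.prodMk (measurable_snd.snd.prodMk measurable_fst.snd.snd))
  set Ig : ℝ × (Fin k → ℝ) × ℝ → ℝ := fun p =>
    ∫ y, heaviside (y.1 - p.1) * Ybar (p.1, p.2.1) y * g (y.1, y.2, p.2.2) ∂ν with hIgdef
  have hIgsm : StronglyMeasurable Ig := hFm.stronglyMeasurable.integral_prod_right'
  set Ne : ℝ≥0∞ := ENNReal.ofReal N₁ with hNedef
  set Kt : ℝ → ℝ≥0∞ :=
    fun t => ∫⁻ y, (ENNReal.ofReal |g (y.1, y.2, t)|) ^ 2 * we y.1 t ∂ν with hKtdef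
  set L : ℝ≥0∞ := ∫⁻ p, ENNReal.ofReal ((Ig p) ^ 2 * w p.1 p.2.2) ∂μ with hLdef
  set R : ℝ≥0∞ := ∫⁻ p, (ENNReal.ofReal |g p|) ^ 2 * we p.1 p.2.2 ∂μ with hRdef
  have hKtm : Measurable Kt := by
    apply Measurable.lintegral_prod_right'
      (f := fun z : ℝ × ℝ × (Fin k → ℝ) =>
        (ENNReal.ofReal |g (z.2.1, z.2.2, z.1)|) ^ 2 * we z.2.1 z.1)
    exact hGm.comp (measurable_snd.fst.prodMk (measurable_snd.snd.prodMk measurable_fst))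
  have key : ∀ p ∈ Q, ENNReal.ofReal ((Ig p) ^ 2 * w p.1 p.2.2) ≤ Ne ^ 2 * vS * Kt p.2.2 := by
    intro p hp
    have hp1 : p.1 ∈ Set.Ioo a b := hp.1
    set t := p.2.2 with htdef
    set Hz : ℝ × (Fin k → ℝ) → ℝ≥0∞ :=
      fun y => ENNReal.ofReal (heaviside (y.1 - p.1)) with hHzdef
    set Ge : ℝ × (Fin k → ℝ) → ℝ≥0∞ := fun y => ENNReal.ofReal |g (y.1, y.2, t)| with hGedef
    have hf2m : AEMeasurable (fun y => Hz y * Ge y) ν := by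
      apply Measurable.aemeasurable
      refine Measurable.mul (f := Hz) (g := Ge) ?_ ?_
      · exact ENNReal.measurable_ofReal.comp
          (measurable_heaviside.comp (measurable_fst.sub measurable_const))
      · exact ENNReal.measurable_ofReal.comp
          ((hgm.comp (measurable_fst.prodMk (measurable_snd.prodMk measurable_const))).abs)
    have step1 : ENNReal.ofReal |Ig p| ≤ Ne * ∫⁻ y, Hz y * Ge y ∂ν := by
      have h0 : ENNReal.ofReal |Ig p| ≤ ∫⁻ y, ENNReal.ofReal
          ‖heaviside (y.1 - p.1) * Ybar (p.1, p.2.1) y * g (y.1, y.2, t)‖ ∂ν := by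
        refine le_trans (ENNReal.ofReal_le_ofReal ?_) ENNReal.ofReal_toReal_le
        simpa [Real.norm_eq_abs] using norm_integral_le_lintegral_norm (μ := ν)
          (fun y : ℝ × (Fin k → ℝ) =>
            heaviside (y.1 - p.1) * Ybar (p.1, p.2.1) y * g (y.1, y.2, t))
      refine h0.trans ?_
      have hpt : ∀ y : ℝ × (Fin k → ℝ), ENNReal.ofReal
          ‖heaviside (y.1 - p.1) * Ybar (p.1, p.2.1) y * g (y.1, y.2, t)‖
          ≤ Ne * (Hz y * Ge y) := by
        intro y
        rw [Real.norm_eq_abs, abs_mul, abs_mul, abs_of_nonneg (heaviside_nonneg _),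
          ENNReal.ofReal_mul (mul_nonneg (heaviside_nonneg _) (abs_nonneg _)),
          ENNReal.ofReal_mul (heaviside_nonneg _)]
        calc Hz y * ENNReal.ofReal |Ybar (p.1, p.2.1) y| * Ge y
            ≤ Hz y * Ne * Ge y := by
              gcongr
              exact ENNReal.ofReal_le_ofReal (hYb _ _)
          _ = Ne * (Hz y * Ge y) := by ring
      exact (lintegral_mono hpt).trans
        (le_of_eq (lintegral_const_mul' _ _ ENNReal.ofReal_ne_top))
    have step2 : (∫⁻ y, Hz y * Ge y ∂ν) ^ 2 ≤ (∫⁻ y, Hz y * Ge y ^ 2 ∂ν) * vS := by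
      have hcs := lintegral_sq_le ν _ hf2m
      rw [hνdef, Measure.restrict_apply_univ, ← hvSdef] at hcs
      refine hcs.trans (le_of_eq ?_)
      congr 1
      refine lintegral_congr fun y => ?_
      rw [mul_pow]
      congr 1
      simp only [hHzdef]
      rw [← ENNReal.ofReal_pow (heaviside_nonneg _), heaviside_sq]
    have step3 : (∫⁻ y, Hz y * Ge y ^ 2 ∂ν) * we p.1 t ≤ Kt t := by
      simp only [hKtdef]
      rw [← lintegral_mul_const' _ _ ENNReal.ofReal_ne_top]
      refine lintegral_mono_ae ((ae_restrict_mem hSm).mono fun y hy => ?_)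
      by_cases hlt : p.1 < y.1
      · have h1 : Hz y = 1 := by
          simp [hHzdef, heaviside, sub_pos, hlt]
        rw [h1, one_mul]
        exact mul_le_mul_right (ENNReal.ofReal_le_ofReal (hw_mono p.1 y.1 t hp1 hlt.le)) _
      · have h0 : Hz y = 0 := by
          simp [hHzdef, heaviside, sub_pos, hlt]
        rw [h0, zero_mul, zero_mul]
        exact zero_le
    calc ENNReal.ofReal ((Ig p) ^ 2 * w p.1 t)
        = (ENNReal.ofReal |Ig p|) ^ 2 * we p.1 t := by
          rw [ENNReal.ofReal_mul (sq_nonneg _), ← sq_abs (Ig p),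
            ENNReal.ofReal_pow (abs_nonneg _)]
      _ ≤ (Ne * ∫⁻ y, Hz y * Ge y ∂ν) ^ 2 * we p.1 t :=
          mul_le_mul_left (pow_le_pow_left' step1 2) _
      _ = Ne ^ 2 * (∫⁻ y, Hz y * Ge y ∂ν) ^ 2 * we p.1 t := by rw [mul_pow]
      _ ≤ Ne ^ 2 * ((∫⁻ y, Hz y * Ge y ^ 2 ∂ν) * vS) * we p.1 t :=
          mul_le_mul_left (mul_le_mul_right step2 (Ne ^ 2)) _
      _ = Ne ^ 2 * vS * ((∫⁻ y, Hz y * Ge y ^ 2 ∂ν) * we p.1 t) := by ring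
      _ ≤ Ne ^ 2 * vS * Kt t := mul_le_mul_right step3 _
  have hL1 : L ≤ Ne ^ 2 * vS * ∫⁻ p, Kt p.2.2 ∂μ := by
    rw [hLdef, ← lintegral_const_mul' _ _
      (ENNReal.mul_ne_top (ENNReal.pow_ne_top ENNReal.ofReal_ne_top) hvS_ne_top)]
    exact lintegral_mono_ae ((ae_restrict_mem hQm).mono fun p hp => key p hp)
  have hμprod : μ = (volume.restrict (Set.Ioo a b)).prod
      ((volume.restrict Ω₁).prod (volume.restrict (Set.Ioo 0 T))) := by
    rw [hμdef, hQdef, Measure.prod_restrict, Measure.prod_restrict,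
      ← Measure.volume_eq_prod, ← Measure.volume_eq_prod]
  have hνprod : ν = (volume.restrict (Set.Ioo a b)).prod (volume.restrict Ω₁) := by
    rw [hνdef, hSdef, Measure.prod_restrict, ← Measure.volume_eq_prod]
  have hFact : ∫⁻ p, Kt p.2.2 ∂μ = vS * ∫⁻ t in Set.Ioo 0 T, Kt t := by
    rw [hμprod]
    refine (lintegral_prod _ ((hKtm.comp measurable_snd.snd).aemeasurable)).trans ?_
    have hinner : (∫⁻ q : (Fin k → ℝ) × ℝ, Kt q.2
        ∂((volume.restrict Ω₁).prod (volume.restrict (Set.Ioo 0 T))))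
        = volume Ω₁ * ∫⁻ t in Set.Ioo 0 T, Kt t := by
      refine (lintegral_prod _ ((hKtm.comp measurable_snd).aemeasurable)).trans ?_
      calc (∫⁻ _x in Ω₁, (∫⁻ t in Set.Ioo 0 T, Kt t))
          = (∫⁻ t in Set.Ioo 0 T, Kt t) * volume Ω₁ := by
            rw [lintegral_const, Measure.restrict_apply_univ]
        _ = volume Ω₁ * ∫⁻ t in Set.Ioo 0 T, Kt t := mul_comm _ _
    calc (∫⁻ _x in Set.Ioo a b, ∫⁻ q : (Fin k → ℝ) × ℝ, Kt q.2
            ∂((volume.restrict Ω₁).prod (volume.restrict (Set.Ioo 0 T))))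
        = ∫⁻ _x in Set.Ioo a b, (volume Ω₁ * ∫⁻ t in Set.Ioo 0 T, Kt t) := by rw [hinner]
      _ = vS * ∫⁻ t in Set.Ioo 0 T, Kt t := by
          rw [lintegral_const, Measure.restrict_apply_univ, hvSdef, hSdef,
            Measure.volume_eq_prod, Measure.prod_prod]
          ring
  have hSwap : ∫⁻ t in Set.Ioo 0 T, Kt t = R := by
    have hjm : AEMeasurable (fun z : ℝ × (ℝ × (Fin k → ℝ)) =>
        (ENNReal.ofReal |g (z.2.1, z.2.2, z.1)|) ^ 2 * we z.2.1 z.1)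
        ((volume.restrict (Set.Ioo 0 T)).prod ν) :=
      (hGm.comp (measurable_snd.fst.prodMk
        (measurable_snd.snd.prodMk measurable_fst))).aemeasurable
    have hswp : ∫⁻ t in Set.Ioo 0 T, Kt t
        = ∫⁻ y, (∫⁻ t in Set.Ioo 0 T,
            (ENNReal.ofReal |g (y.1, y.2, t)|) ^ 2 * we y.1 t) ∂ν := by
      simp only [hKtdef]
      exact lintegral_lintegral_swap hjm
    have hR2 : R = ∫⁻ y₁ in Set.Ioo a b, ∫⁻ y₂ in Ω₁, ∫⁻ t in Set.Ioo 0 T,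
        (ENNReal.ofReal |g (y₁, y₂, t)|) ^ 2 * we y₁ t := by
      rw [hRdef, hμprod]
      refine (lintegral_prod _ hGm.aemeasurable).trans ?_
      refine lintegral_congr fun y₁ => ?_
      exact lintegral_prod _ ((hGm.comp (measurable_prodMk_left (x := y₁))).aemeasurable)
    have hL2 : (∫⁻ y, (∫⁻ t in Set.Ioo 0 T,
          (ENNReal.ofReal |g (y.1, y.2, t)|) ^ 2 * we y.1 t) ∂ν)
        = ∫⁻ y₁ in Set.Ioo a b, ∫⁻ y₂ in Ω₁, ∫⁻ t in Set.Ioo 0 T,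
          (ENNReal.ofReal |g (y₁, y₂, t)|) ^ 2 * we y₁ t := by
      have hym : AEMeasurable (fun y : ℝ × (Fin k → ℝ) => ∫⁻ t in Set.Ioo 0 T,
          (ENNReal.ofReal |g (y.1, y.2, t)|) ^ 2 * we y.1 t)
          ((volume.restrict (Set.Ioo a b)).prod (volume.restrict Ω₁)) := by
        apply Measurable.aemeasurable
        apply Measurable.lintegral_prod_right'
          (f := fun z : (ℝ × (Fin k → ℝ)) × ℝ =>
            (ENNReal.ofReal |g (z.1.1, z.1.2, z.2)|) ^ 2 * we z.1.1 z.2)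
        exact hGm.comp (measurable_fst.fst.prodMk
          (measurable_fst.snd.prodMk measurable_snd))
      rw [hνprod]
      exact lintegral_prod _ hym
    rw [hswp, hL2, hR2]
  have hLR : L ≤ Ne ^ 2 * vS ^ 2 * R := by
    refine hL1.trans ?_
    rw [hFact, hSwap]
    ring_nf
    exact le_of_eq (by ring)
  have hInt : Integrable (fun p => g p ^ 2 * w p.1 p.2.2) μ := by
    have h2 : Integrable (fun p => g p ^ 2) μ := hgl2.integrable_sq
    have hwQae : ∀ᵐ p ∂μ, ‖w p.1 p.2.2‖ ≤ W :=
      (ae_restrict_mem hQm).mono fun p hp => by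
        rw [Real.norm_eq_abs, abs_of_pos (hw_pos _ _)]
        exact hw_bdd _ _ hp.1
    have h3 := h2.bdd_mul (c := W)
      ((hwm.comp (measurable_fst.prodMk measurable_snd.snd)).aestronglyMeasurable) hwQae
    simpa [mul_comm] using h3
  have hRHSg : ∫ p, g p ^ 2 * w p.1 p.2.2 ∂μ = R.toReal := by
    rw [integral_eq_lintegral_of_nonneg_ae
      (Filter.Eventually.of_forall fun p => mul_nonneg (sq_nonneg _) (hw_pos _ _).le)
      ((hgm.pow_const 2).mul
        (hwm.comp (measurable_fst.prodMk measurable_snd.snd))).aestronglyMeasurable, hRdef]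
    congr 1
    refine lintegral_congr fun p => ?_
    rw [ENNReal.ofReal_mul (sq_nonneg _), ← sq_abs (g p), ENNReal.ofReal_pow (abs_nonneg _)]
  have hRfin : R ≠ ∞ := by
    have hlt := hInt.lintegral_lt_top
    have heq : R = ∫⁻ p, ENNReal.ofReal (g p ^ 2 * w p.1 p.2.2) ∂μ := by
      rw [hRdef]
      refine lintegral_congr fun p => ?_
      rw [ENNReal.ofReal_mul (sq_nonneg _), ← sq_abs (g p), ENNReal.ofReal_pow (abs_nonneg _)]
    rw [heq]
    exact hlt.ne
  have hLHSg : ∫ p, (Ig p) ^ 2 * w p.1 p.2.2 ∂μ = L.toReal := by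
    rw [integral_eq_lintegral_of_nonneg_ae
      (Filter.Eventually.of_forall fun p => mul_nonneg (sq_nonneg _) (hw_pos _ _).le)
      ((hIgsm.measurable.pow_const 2).mul
        (hwm.comp (measurable_fst.prodMk measurable_snd.snd))).aestronglyMeasurable, hLdef]
  have hRHScongr : ∫ p, h p ^ 2 * w p.1 p.2.2 ∂μ = ∫ p, g p ^ 2 * w p.1 p.2.2 ∂μ :=
    integral_congr_ae (hfg.mono fun p hp => by simp [hp])
  have hLHScongr : (∫ p, (∫ y, heaviside (y.1 - p.1) * Ybar (p.1, p.2.1) y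
        * h (y.1, y.2, p.2.2) ∂ν) ^ 2 * w p.1 p.2.2 ∂μ)
      = ∫ p, (Ig p) ^ 2 * w p.1 p.2.2 ∂μ := by
    have hnull : volume ({p : ℝ × (Fin k → ℝ) × ℝ | h p ≠ g p} ∩ Q) = 0 := by
      have h0 : μ {p | ¬ h p = g p} = 0 := ae_iff.mp hfg
      exact le_antisymm (le_trans (Measure.le_restrict_apply _ _) h0.le) zero_le
    obtain ⟨N, hNsub, hNm, hNz⟩ := exists_measurable_superset_of_null hnull
    have hψ : MeasurePreserving (fun z : ℝ × (ℝ × (Fin k → ℝ)) => (z.2.1, z.2.2, z.1))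
        (volume : Measure (ℝ × (ℝ × (Fin k → ℝ))))
        (volume : Measure (ℝ × (Fin k → ℝ) × ℝ)) := by
      have h1 : MeasurePreserving (Prod.swap : ℝ × (ℝ × (Fin k → ℝ)) → (ℝ × (Fin k → ℝ)) × ℝ)
          volume volume := by
        have := Measure.measurePreserving_swap (μ := (volume : Measure ℝ))
          (ν := (volume : Measure (ℝ × (Fin k → ℝ))))
        rwa [← Measure.volume_eq_prod, ← Measure.volume_eq_prod] at this
      exact (MeasureTheory.volume_preserving_prodAssoc).comp h1
    have hA : volume ((fun z : ℝ × (ℝ × (Fin k → ℝ)) => (z.2.1, z.2.2, z.1)) ⁻¹' N) = 0 := by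
      rw [hψ.measure_preimage hNm.nullMeasurableSet]; exact hNz
    have hsec : ∀ᵐ t : ℝ ∂volume, volume {y : ℝ × (Fin k → ℝ) | (y.1, y.2, t) ∈ N} = 0 := by
      have hAm : MeasurableSet
          ((fun z : ℝ × (ℝ × (Fin k → ℝ)) => (z.2.1, z.2.2, z.1)) ⁻¹' N) :=
        hNm.preimage (measurable_snd.fst.prodMk (measurable_snd.snd.prodMk measurable_fst))
      rw [Measure.volume_eq_prod] at hA
      have h2 := (Measure.measure_prod_null hAm).1 hA
      filter_upwards [h2] with t ht
      exact ht
    obtain ⟨Bt, hBsub, hBm, hBz⟩ := exists_measurable_superset_of_null (ae_iff.mp hsec)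
    have hQB : μ {p : ℝ × (Fin k → ℝ) × ℝ | p.2.2 ∈ Bt} = 0 := by
      have hle : μ {p : ℝ × (Fin k → ℝ) × ℝ | p.2.2 ∈ Bt}
          ≤ volume {p : ℝ × (Fin k → ℝ) × ℝ | p.2.2 ∈ Bt} :=
        Measure.le_iff'.1 Measure.restrict_le_self _
      have hset : {p : ℝ × (Fin k → ℝ) × ℝ | p.2.2 ∈ Bt}
          = Set.univ ×ˢ Set.univ ×ˢ Bt := by
        ext p; simp [Set.mem_prod]
      rw [hset, Measure.volume_eq_prod, Measure.prod_prod, Measure.volume_eq_prod,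
        Measure.prod_prod, hBz, mul_zero, mul_zero] at hle
      rw [hset]
      exact le_antisymm hle zero_le
    have hgood : ∀ᵐ p ∂μ, volume {y : ℝ × (Fin k → ℝ) | (y.1, y.2, p.2.2) ∈ N} = 0 := by
      have hae : ∀ᵐ p ∂μ, p.2.2 ∉ Bt := by
        have hs : {p : ℝ × (Fin k → ℝ) × ℝ | ¬ p.2.2 ∉ Bt} = {p | p.2.2 ∈ Bt} := by
          ext p; simp
        rw [ae_iff, hs]; exact hQB
      filter_upwards [hae] with p hp
      by_contra hbad
      exact hp (hBsub hbad)
    refine integral_congr_ae ?_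
    filter_upwards [hgood, ae_restrict_mem hQm] with p hp hpQ
    have hpt : p.2.2 ∈ Set.Ioo 0 T := hpQ.2.2
    have hinner : (∫ y, heaviside (y.1 - p.1) * Ybar (p.1, p.2.1) y
        * h (y.1, y.2, p.2.2) ∂ν) = Ig p := by
      refine integral_congr_ae ?_
      have hν0 : ν {y : ℝ × (Fin k → ℝ) | (y.1, y.2, p.2.2) ∈ N} = 0 :=
        le_antisymm (le_trans (Measure.le_iff'.1 Measure.restrict_le_self _) hp.le) zero_le
      have hae : ∀ᵐ y ∂ν, (y.1, y.2, p.2.2) ∉ N := by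
        have hs : {y : ℝ × (Fin k → ℝ) | ¬ (y.1, y.2, p.2.2) ∉ N}
            = {y | (y.1, y.2, p.2.2) ∈ N} := by ext y; simp
        rw [ae_iff, hs]; exact hν0
      filter_upwards [hae, ae_restrict_mem hSm] with y hyN hyS
      have heqy : h (y.1, y.2, p.2.2) = g (y.1, y.2, p.2.2) := by
        by_contra hne
        exact hyN (hNsub ⟨hne, ⟨hyS.1, hyS.2, hpt⟩⟩)
      rw [heqy]
    rw [hinner]
  rw [hLHScongr, hRHScongr, hLHSg, hRHSg]
  have hfin2 : Ne ^ 2 * vS ^ 2 * R ≠ ∞ :=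
    ENNReal.mul_ne_top (ENNReal.mul_ne_top (ENNReal.pow_ne_top ENNReal.ofReal_ne_top)
      (ENNReal.pow_ne_top hvS_ne_top)) hRfin
  calc L.toReal ≤ (Ne ^ 2 * vS ^ 2 * R).toReal := ENNReal.toReal_mono hfin2 hLR
    _ = N₁ ^ 2 * vS.toReal ^ 2 * R.toReal := by
        rw [ENNReal.toReal_mul, ENNReal.toReal_mul, ENNReal.toReal_pow, ENNReal.toReal_pow,
          hNedef, ENNReal.toReal_ofReal hN₁.le]
    _ = (N₁ ^ 2 * vS.toReal ^ 2) * R.toReal := by ring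

/-- Lemma 3.2: weighted L² bound for the global interaction operator with the
Heaviside-truncated kernel Y(x,y) = H(y₁−x₁) Ȳ(x,y), over
Q_T = Ω × (0,T), Ω = (a,b) × Ω₁, with the Carleman weight
φ_λ(x₁,t) = exp(2λ(x₁² − α(t−T/2)²)). -/
theorem lemma_3_2 (k : ℕ) (a b T α N₁ : ℝ) (ha : 0 ≤ a) (hab : a < b)
    (hT : 0 < T) (hα : 0 < α) (hN₁ : 0 < N₁) (B : Fin k → ℝ) (hB : ∀ i, 0 < B i) :
    ∃ C > 0,
      ∀ (Ybar : (ℝ × (Fin k → ℝ)) → (ℝ × (Fin k → ℝ)) → ℝ),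
        Measurable (Function.uncurry Ybar) →
        (∀ x y, |Ybar x y| ≤ N₁) →
        ∀ (h : ℝ × (Fin k → ℝ) × ℝ → ℝ),
          MemLp h 2 (volume.restrict
            (Set.Ioo a b ×ˢ (Set.univ.pi fun i => Set.Ioo (-(B i)) (B i)) ×ˢ Set.Ioo 0 T)) →
        ∀ l : ℝ, 0 < l →
          (∫ p in Set.Ioo a b ×ˢ (Set.univ.pi fun i => Set.Ioo (-(B i)) (B i)) ×ˢ Set.Ioo 0 T,
              (∫ y in Set.Ioo a b ×ˢ (Set.univ.pi fun i => Set.Ioo (-(B i)) (B i)),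
                  heaviside (y.1 - p.1) * Ybar (p.1, p.2.1) y * h (y.1, y.2, p.2.2)) ^ 2
                * Real.exp (2 * l * (p.1 ^ 2 - α * (p.2.2 - T / 2) ^ 2)))
          ≤ C * ∫ p in Set.Ioo a b ×ˢ (Set.univ.pi fun i => Set.Ioo (-(B i)) (B i)) ×ˢ Set.Ioo 0 T,
              (h p) ^ 2 * Real.exp (2 * l * (p.1 ^ 2 - α * (p.2.2 - T / 2) ^ 2)) := by
  have hvol_pos :
      0 < (volume (Set.Ioo a b ×ˢ (Set.univ.pi fun i => Set.Ioo (-(B i)) (B i)))).toReal := by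
    rw [Measure.volume_eq_prod, Measure.prod_prod, volume_pi_pi]
    simp only [Real.volume_Ioo]
    apply ENNReal.toReal_pos
    · refine mul_ne_zero (ENNReal.ofReal_pos.2 (by linarith)).ne' ?_
      exact (Finset.prod_ne_zero_iff.2 fun i _ =>
        (ENNReal.ofReal_pos.2 (by linarith [hB i])).ne')
    · exact ENNReal.mul_ne_top ENNReal.ofReal_ne_top
        (ENNReal.prod_lt_top fun i _ => ENNReal.ofReal_lt_top).ne
  refine ⟨N₁ ^ 2 * (volume (Set.Ioo a b ×ˢ (Set.univ.pi fun i => Set.Ioo (-(B i)) (B i)))).toReal ^ 2,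
    by positivity, fun Ybar hYm hYb h hh l hl => ?_⟩
  refine aux_lemma_3_2 k a b N₁ T ha hab hN₁ B
    (fun x t => Real.exp (2 * l * (x ^ 2 - α * (t - T / 2) ^ 2))) ?_
    (fun x t => Real.exp_pos _) ?_ (Real.exp (2 * l * b ^ 2)) ?_ Ybar hYm hYb h hh
  · have : Measurable fun z : ℝ × ℝ => 2 * l * (z.1 ^ 2 - α * (z.2 - T / 2) ^ 2) := by
      apply Measurable.const_mul
      exact (measurable_fst.pow_const 2).sub
        (((measurable_snd.sub measurable_const).pow_const 2).const_mul α)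
    exact Real.measurable_exp.comp this
  · intro x y t hx hxy
    apply Real.exp_le_exp.2
    have hx0 : 0 ≤ x := le_trans ha hx.1.le
    have hsq : x ^ 2 ≤ y ^ 2 := by nlinarith
    have := mul_le_mul_of_nonneg_left
      (show x ^ 2 - α * (t - T / 2) ^ 2 ≤ y ^ 2 - α * (t - T / 2) ^ 2 by linarith)
      (by linarith : (0:ℝ) ≤ 2 * l)
    linarith
  · intro x t hx
    apply Real.exp_le_exp.2
    have hx0 : 0 ≤ x := le_trans ha hx.1.le
    have hxb : x ≤ b := hx.2.le
    have hsq : x ^ 2 ≤ b ^ 2 := by nlinarith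
    have hα2 : 0 ≤ α * (t - T / 2) ^ 2 := mul_nonneg hα.le (sq_nonneg _)
    have := mul_le_mul_of_nonneg_left
      (show x ^ 2 - α * (t - T / 2) ^ 2 ≤ b ^ 2 by linarith)
      (by linarith : (0:ℝ) ≤ 2 * l)
    linarith
end

section
/- Let Ω ⊂ ℝⁿ be a bounded domain, T > 0, Q_T = Ω×(0,T), α > 0, and φ_λ(x₁,t) = exp(2λ(x₁² − α(t−T/2)²)). Then there exists C₁ = C₁(α) > 0 such that for all λ > 0 and all h ∈ L²(Q_T): ∫_{Q_T} ( ∫_{T/2}^t h(x,τ) dτ )² φ_λ(x₁,t) dx dt ≤ (C₁/λ) ∫_{Q_T} h²(x,t) φ_λ(x₁,t) dx dt. -/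
open MeasureTheory

open Set Real
open scoped ENNReal

namespace L33


lemma ofReal_integral_le {μ : Measure ℝ} {f : ℝ → ℝ} (hf : ∀ x, 0 ≤ f x) :
    ENNReal.ofReal (∫ x, f x ∂μ) ≤ ∫⁻ x, ENNReal.ofReal (f x) ∂μ := by
  by_cases hi : Integrable f μ
  · exact le_of_eq (ofReal_integral_eq_lintegral_ofReal hi (ae_of_all _ hf))
  · rw [integral_undef hi]; simp

lemma exp_integral (r d a b : ℝ) (hr : r ≠ 0) :
    ∫ σ in a..b, Real.exp (r * σ + d) = (Real.exp (r*b+d) - Real.exp (r*a+d)) / r := by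
  rw [intervalIntegral.integral_comp_mul_add Real.exp hr d, integral_exp]
  rw [smul_eq_mul]; ring

lemma kernelA_le {m c t : ℝ} (hm : 0 < m) (hct : c < t) :
    ∫⁻ τ in Set.Ioc c t, ENNReal.ofReal (Real.exp (-(m * ((t-c)^2 - (τ-c)^2))))
      ≤ ENNReal.ofReal (1 / Real.sqrt m) := by
  have hsm : 0 < Real.sqrt m := Real.sqrt_pos.2 hm
  have hmm : Real.sqrt m * Real.sqrt m = m := Real.mul_self_sqrt hm.le
  have hs : 0 < t - c := sub_pos.2 hct
  by_cases hsmall : t - c ≤ 1 / Real.sqrt m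
  · calc ∫⁻ τ in Set.Ioc c t, ENNReal.ofReal (Real.exp (-(m * ((t-c)^2 - (τ-c)^2))))
        ≤ ∫⁻ _ in Set.Ioc c t, ENNReal.ofReal 1 := by
          refine setLIntegral_mono' measurableSet_Ioc fun τ hτ => ?_
          apply ENNReal.ofReal_le_ofReal
          rw [show (1:ℝ) = Real.exp 0 from (Real.exp_zero).symm]
          apply Real.exp_le_exp.2
          have h1 : (τ - c)^2 ≤ (t - c)^2 := by
            apply sq_le_sq' <;> nlinarith [hτ.1, hτ.2]
          nlinarith
      _ = ENNReal.ofReal (t - c) := by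
          rw [setLIntegral_const, Real.volume_Ioc, ENNReal.ofReal_one, one_mul]
      _ ≤ ENNReal.ofReal (1 / Real.sqrt m) := ENNReal.ofReal_le_ofReal hsmall
  · push_neg at hsmall
    have hms : m * (t - c) ≠ 0 := by positivity
    calc ∫⁻ τ in Set.Ioc c t, ENNReal.ofReal (Real.exp (-(m * ((t-c)^2 - (τ-c)^2))))
        ≤ ∫⁻ τ in Set.Ioc c t,
            ENNReal.ofReal (Real.exp (m*(t-c) * τ + (-(m*(t-c)*t)))) := by
          refine setLIntegral_mono' measurableSet_Ioc fun τ hτ => ?_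
          apply ENNReal.ofReal_le_ofReal
          apply Real.exp_le_exp.2
          nlinarith [mul_nonneg (mul_nonneg hm.le (sub_nonneg.2 hτ.2)) (sub_pos.2 hτ.1).le]
      _ = ENNReal.ofReal (∫ τ in Set.Ioc c t, Real.exp (m*(t-c) * τ + (-(m*(t-c)*t)))) := by
          rw [ofReal_integral_eq_lintegral_ofReal]
          · exact (Continuous.integrableOn_Ioc (by continuity))
          · exact ae_of_all _ fun τ => (Real.exp_pos _).le
      _ ≤ ENNReal.ofReal (1 / Real.sqrt m) := by
          apply ENNReal.ofReal_le_ofReal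
          rw [← intervalIntegral.integral_of_le hct.le, exp_integral _ _ _ _ hms]
          have h1 : m*(t-c) * t + (-(m*(t-c)*t)) = 0 := by ring
          rw [h1, Real.exp_zero]
          have hE : 0 ≤ Real.exp (m*(t-c) * c + -(m*(t-c)*t)) := (Real.exp_pos _).le
          rw [div_le_div_iff₀ (by positivity) hsm]
          have h4 : 1 < (t - c) * Real.sqrt m := (div_lt_iff₀ hsm).1 hsmall
          nlinarith [mul_nonneg hE hsm.le, mul_lt_mul_of_pos_left h4 hsm]




lemma gauss_tail {m τ : ℝ} (hm : 0 < m) (s : Set ℝ) :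
    ∫⁻ t in s, ENNReal.ofReal (Real.exp (-(m * (t - τ)^2)))
      ≤ ENNReal.ofReal (Real.sqrt (π / m)) := by
  refine (setLIntegral_le_lintegral _ _).trans ?_
  have hmp : MeasurePreserving (fun x : ℝ => x + τ) volume volume :=
    measurePreserving_add_right volume τ
  have hmeas : Measurable fun t : ℝ => ENNReal.ofReal (Real.exp (-(m * (t - τ)^2))) := by
    fun_prop
  have := hmp.lintegral_comp (f := fun t => ENNReal.ofReal (Real.exp (-(m * (t - τ)^2)))) hmeas
  rw [← this]
  simp only [add_sub_cancel_right]
  have hre : ∀ a : ℝ, -(m * a ^ 2) = -m * a ^ 2 := fun a => by ring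
  simp_rw [hre]
  rw [← ofReal_integral_eq_lintegral_ofReal (integrable_exp_neg_mul_sq hm)
      (ae_of_all _ fun x => (Real.exp_pos _).le), integral_gaussian]

lemma lintegral_CS (μ : Measure ℝ) (f g : ℝ → ℝ≥0∞) (hf : AEMeasurable f μ)
    (hg : AEMeasurable g μ) :
    (∫⁻ x, f x * g x ∂μ) ^ 2 ≤ (∫⁻ x, (f x) ^ 2 ∂μ) * (∫⁻ x, (g x) ^ 2 ∂μ) := by
  have hc : Real.HolderConjugate 2 2 := ⟨by norm_num, by norm_num, by norm_num⟩
  have h := ENNReal.lintegral_mul_le_Lp_mul_Lq μ hc hf hg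
  have h2 : ∀ h : ℝ → ℝ≥0∞, (fun x => h x ^ (2:ℝ)) = fun x => h x ^ 2 := by
    intro h; funext x; rw [← ENNReal.rpow_natCast (h x) 2]; norm_num
  calc (∫⁻ x, f x * g x ∂μ) ^ 2
      ≤ ((∫⁻ x, (f x) ^ (2:ℝ) ∂μ) ^ (1/(2:ℝ)) * (∫⁻ x, (g x) ^ (2:ℝ) ∂μ) ^ (1/(2:ℝ))) ^ 2 := by
        exact pow_le_pow_left' h 2
    _ = (∫⁻ x, (f x) ^ 2 ∂μ) * (∫⁻ x, (g x) ^ 2 ∂μ) := by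
        rw [mul_pow, ← ENNReal.rpow_natCast (_ ^ (1/(2:ℝ))) 2, ← ENNReal.rpow_natCast (_ ^ (1/(2:ℝ))) 2,
          ← ENNReal.rpow_mul, ← ENNReal.rpow_mul]
        norm_num [h2 f, h2 g]





lemma oneD {m : ℝ} (hm : 0 < m) (c b : ℝ) {k : ℝ → ℝ} (hk : Measurable k) :
    ∫⁻ t in Ioo c b, ENNReal.ofReal ((∫ τ in c..t, k τ)^2 * Real.exp (-(2*m*(t-c)^2)))
      ≤ ENNReal.ofReal (Real.sqrt π / m) *
        ∫⁻ τ in Ioo c b, ENNReal.ofReal ((k τ)^2 * Real.exp (-(2*m*(τ-c)^2))) := by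
  have hsm : 0 < Real.sqrt m := Real.sqrt_pos.2 hm
  set F : ℝ → ℝ≥0∞ := fun τ => ENNReal.ofReal (|k τ| * Real.exp (-(m*(τ-c)^2))) with hF
  set E : ℝ → ℝ → ℝ≥0∞ :=
    fun t τ => ENNReal.ofReal (Real.exp (-(m*((t-c)^2-(τ-c)^2)))) with hE
  have hFmeas : Measurable F := by
    apply Measurable.ennreal_ofReal
    exact hk.abs.mul (by fun_prop)
  -- Step 1 : pointwise bound for each t
  have step1 : ∀ t ∈ Ioo c b,
      ENNReal.ofReal ((∫ τ in c..t, k τ)^2 * Real.exp (-(2*m*(t-c)^2)))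
        ≤ ENNReal.ofReal (1 / Real.sqrt m) * ∫⁻ τ in Ioc c t, F τ ^ 2 * E t τ := by
    intro t ht
    have hct : c < t := ht.1
    have h1 : |∫ τ in c..t, k τ| ≤ ∫ τ in c..t, |k τ| :=
      intervalIntegral.abs_integral_le_integral_abs hct.le
    have h0 : (∫ τ in c..t, k τ)^2 ≤ (∫ τ in c..t, |k τ|)^2 := by
      rw [← sq_abs]; exact pow_le_pow_left₀ (abs_nonneg _) h1 2
    have hX : 0 ≤ ∫ τ in c..t, |k τ| :=
      intervalIntegral.integral_nonneg hct.le (fun τ _ => abs_nonneg _)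
    have hexpsq : Real.exp (-(m*(t-c)^2)) ^ 2 = Real.exp (-(2*m*(t-c)^2)) := by
      rw [pow_two, ← Real.exp_add]; congr 1; ring
    calc ENNReal.ofReal ((∫ τ in c..t, k τ)^2 * Real.exp (-(2*m*(t-c)^2)))
        ≤ ENNReal.ofReal (((∫ τ in c..t, |k τ|) * Real.exp (-(m*(t-c)^2)))^2) := by
          apply ENNReal.ofReal_le_ofReal
          rw [mul_pow, hexpsq]
          exact mul_le_mul_of_nonneg_right h0 (Real.exp_pos _).le
      _ = (ENNReal.ofReal ((∫ τ in c..t, |k τ|) * Real.exp (-(m*(t-c)^2))))^2 :=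
          (ENNReal.ofReal_pow (by positivity) 2)
      _ ≤ (∫⁻ τ in Ioc c t, F τ * E t τ) ^ 2 := by
          apply pow_le_pow_left' ?_ 2
          have he : (∫ τ in c..t, |k τ|) * Real.exp (-(m*(t-c)^2))
              = ∫ τ in Set.Ioc c t, (|k τ| * Real.exp (-(m*(t-c)^2))) := by
            rw [intervalIntegral.integral_of_le hct.le, ← integral_mul_const]
          rw [he]
          refine (ofReal_integral_le (fun τ => by positivity)).trans (le_of_eq ?_)
          apply lintegral_congr
          intro τ
          rw [hF, hE]
          rw [← ENNReal.ofReal_mul (by positivity)]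
          congr 1
          rw [mul_assoc, ← Real.exp_add]
          congr 2
          ring
      _ ≤ (∫⁻ τ in Ioc c t, E t τ) * (∫⁻ τ in Ioc c t, F τ ^ 2 * E t τ) := by
          set f2 : ℝ → ℝ≥0∞ :=
            fun τ => ENNReal.ofReal (Real.exp (-(m*((t-c)^2-(τ-c)^2))/2)) with hf2
          have hf2sq : ∀ τ, f2 τ ^ 2 = E t τ := by
            intro τ
            rw [hf2, hE, pow_two, ← ENNReal.ofReal_mul (Real.exp_pos _).le, ← Real.exp_add]
            congr 2; ring
          have hfg : ∀ τ, F τ * E t τ = f2 τ * (F τ * f2 τ) := by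
            intro τ; rw [← mul_assoc, mul_comm (f2 τ) (F τ), mul_assoc, ← pow_two, hf2sq]
          have hf2m : Measurable f2 := by
            apply Measurable.ennreal_ofReal; fun_prop
          calc (∫⁻ τ in Ioc c t, F τ * E t τ) ^ 2
              = (∫⁻ τ in Ioc c t, f2 τ * (F τ * f2 τ)) ^ 2 := by
                congr 1; exact lintegral_congr fun τ => hfg τ
            _ ≤ (∫⁻ τ in Ioc c t, f2 τ ^ 2) * (∫⁻ τ in Ioc c t, (F τ * f2 τ) ^ 2) := by
                exact lintegral_CS _ _ _ hf2m.aemeasurable (hFmeas.mul hf2m).aemeasurable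
            _ = (∫⁻ τ in Ioc c t, E t τ) * (∫⁻ τ in Ioc c t, F τ ^ 2 * E t τ) := by
                congr 1
                · exact lintegral_congr fun τ => hf2sq τ
                · exact lintegral_congr fun τ => by rw [mul_pow, hf2sq]
      _ ≤ ENNReal.ofReal (1 / Real.sqrt m) * ∫⁻ τ in Ioc c t, F τ ^ 2 * E t τ :=
          mul_le_mul_left (kernelA_le hm hct) _
  -- Step 2 : integrate over t, swap, gaussian tail
  have hEb : ∀ t τ : ℝ, c < τ → τ ≤ t →
      E t τ ≤ ENNReal.ofReal (Real.exp (-(m * (t - τ)^2))) := by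
    intro t τ h1 h2
    apply ENNReal.ofReal_le_ofReal
    apply Real.exp_le_exp.2
    nlinarith [mul_nonneg (mul_nonneg hm.le (sub_nonneg.2 h2)) (sub_pos.2 h1).le]
  calc ∫⁻ t in Ioo c b, ENNReal.ofReal ((∫ τ in c..t, k τ)^2 * Real.exp (-(2*m*(t-c)^2)))
      ≤ ∫⁻ t in Ioo c b, ENNReal.ofReal (1 / Real.sqrt m) * ∫⁻ τ in Ioc c t, F τ ^ 2 * E t τ :=
        setLIntegral_mono' measurableSet_Ioo step1
    _ = ENNReal.ofReal (1 / Real.sqrt m) *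
          ∫⁻ t in Ioo c b, ∫⁻ τ in Ioc c t, F τ ^ 2 * E t τ :=
        lintegral_const_mul' _ _ ENNReal.ofReal_ne_top
    _ = ENNReal.ofReal (1 / Real.sqrt m) *
          ∫⁻ t in Ioo c b, ∫⁻ τ in Ioo c b, (Ioc c t).indicator (fun τ => F τ ^ 2 * E t τ) τ := by
        congr 1
        refine setLIntegral_congr_fun measurableSet_Ioo (fun t ht => ?_)
        rw [lintegral_indicator measurableSet_Ioc, Measure.restrict_restrict measurableSet_Ioc]
        congr 1
        have hsub : Ioc c t ⊆ Ioo c b := fun τ hτ =>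
          mem_Ioo.2 ⟨(mem_Ioc.1 hτ).1, lt_of_le_of_lt (mem_Ioc.1 hτ).2 ht.2⟩
        rw [inter_eq_left.2 hsub]
    _ = ENNReal.ofReal (1 / Real.sqrt m) *
          ∫⁻ τ in Ioo c b, ∫⁻ t in Ioo c b, (Ioc c t).indicator (fun τ => F τ ^ 2 * E t τ) τ := by
        congr 1
        apply lintegral_lintegral_swap
        have heq : (Function.uncurry fun t τ => (Ioc c t).indicator (fun τ => F τ ^ 2 * E t τ) τ)
            = ({p : ℝ × ℝ | c < p.2 ∧ p.2 ≤ p.1}).indicator (fun p => F p.2 ^ 2 * E p.1 p.2) := by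
          funext p
          rw [Function.uncurry]
          simp only [indicator_apply, mem_Ioc, mem_setOf_eq]
        rw [heq]
        apply Measurable.aemeasurable
        apply Measurable.indicator
        · exact ((hFmeas.comp measurable_snd).pow_const 2).mul
            (by apply Measurable.ennreal_ofReal; fun_prop)
        · exact (measurableSet_lt measurable_const measurable_snd).inter
            (measurableSet_le measurable_snd measurable_fst)
    _ ≤ ENNReal.ofReal (1 / Real.sqrt m) *
          ∫⁻ τ in Ioo c b, F τ ^ 2 * ENNReal.ofReal (Real.sqrt (π / m)) := by
        apply mul_le_mul_right
        refine setLIntegral_mono' measurableSet_Ioo fun τ hτ => ?_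
        calc ∫⁻ t in Ioo c b, (Ioc c t).indicator (fun τ => F τ ^ 2 * E t τ) τ
            ≤ ∫⁻ t in Ioo c b, F τ ^ 2 * ENNReal.ofReal (Real.exp (-(m * (t - τ)^2))) := by
              refine setLIntegral_mono' measurableSet_Ioo fun t _ => ?_
              by_cases hmem : τ ∈ Ioc c t
              · rw [indicator_of_mem hmem]
                exact mul_le_mul_right (hEb t τ hmem.1 hmem.2) _
              · rw [indicator_of_notMem hmem]; exact zero_le
          _ = F τ ^ 2 * ∫⁻ t in Ioo c b, ENNReal.ofReal (Real.exp (-(m * (t - τ)^2))) :=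
              lintegral_const_mul' _ _ (ENNReal.pow_ne_top ENNReal.ofReal_ne_top)
          _ ≤ F τ ^ 2 * ENNReal.ofReal (Real.sqrt (π / m)) :=
              mul_le_mul_right (gauss_tail hm _) _
    _ = (ENNReal.ofReal (1 / Real.sqrt m) * ENNReal.ofReal (Real.sqrt (π / m))) *
          ∫⁻ τ in Ioo c b, F τ ^ 2 := by
        rw [mul_assoc]
        congr 1
        rw [← lintegral_const_mul' _ _ ENNReal.ofReal_ne_top]
        exact lintegral_congr fun τ => mul_comm _ _
    _ = ENNReal.ofReal (Real.sqrt π / m) *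
          ∫⁻ τ in Ioo c b, ENNReal.ofReal ((k τ)^2 * Real.exp (-(2*m*(τ-c)^2))) := by
        congr 1
        · rw [← ENNReal.ofReal_mul (by positivity)]
          congr 1
          rw [Real.sqrt_div Real.pi_nonneg, one_div_mul_eq_div, div_div,
            Real.mul_self_sqrt hm.le]
        · refine lintegral_congr fun τ => ?_
          rw [hF, ← ENNReal.ofReal_pow (by positivity)]
          congr 1
          rw [mul_pow, sq_abs, pow_two (Real.exp _), ← Real.exp_add]
          congr 2
          ring





lemma oneD_left {m : ℝ} (hm : 0 < m) (a c : ℝ) {k : ℝ → ℝ} (hk : Measurable k) :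
    ∫⁻ t in Ioo a c, ENNReal.ofReal ((∫ τ in c..t, k τ)^2 * Real.exp (-(2*m*(t-c)^2)))
      ≤ ENNReal.ofReal (Real.sqrt π / m) *
        ∫⁻ τ in Ioo a c, ENNReal.ofReal ((k τ)^2 * Real.exp (-(2*m*(τ-c)^2))) := by
  have hmp : MeasurePreserving (fun x : ℝ => 2*c - x) volume volume :=
    Measure.measurePreserving_sub_left volume (2*c)
  have hemb : MeasurableEmbedding (fun x : ℝ => 2*c - x) := by
    have : (fun x : ℝ => 2*c - x) = fun x : ℝ => (MeasurableEquiv.subLeft (2*c)) x := by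
      funext x; simp [MeasurableEquiv.subLeft]; rfl
    rw [this]
    exact (MeasurableEquiv.subLeft (2*c)).measurableEmbedding
  have hpre : (fun x : ℝ => 2*c - x) ⁻¹' (Ioo a c) = Ioo c (2*c - a) := by
    ext x
    simp only [mem_preimage, mem_Ioo]
    constructor <;> intro h <;> constructor <;> linarith [h.1, h.2]
  have hk' : Measurable fun τ => k (2*c - τ) := hk.comp (by fun_prop)
  have hL := hmp.setLIntegral_comp_preimage_emb hemb
    (fun t => ENNReal.ofReal ((∫ τ in c..t, k τ)^2 * Real.exp (-(2*m*(t-c)^2)))) (Ioo a c)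
  rw [hpre] at hL
  have hR := hmp.setLIntegral_comp_preimage_emb hemb
    (fun τ => ENNReal.ofReal ((k τ)^2 * Real.exp (-(2*m*(τ-c)^2)))) (Ioo a c)
  rw [hpre] at hR
  rw [← hL, ← hR]
  have hLcong : ∀ x : ℝ,
      ENNReal.ofReal ((∫ τ in c..(2*c - x), k τ)^2 * Real.exp (-(2*m*((2*c - x)-c)^2)))
        = ENNReal.ofReal ((∫ τ in c..x, k (2*c - τ))^2 * Real.exp (-(2*m*(x-c)^2))) := by
    intro x
    have h1 : ∫ τ in c..x, k (2*c - τ) = ∫ τ in (2*c - x)..(2*c - c), k τ :=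
      intervalIntegral.integral_comp_sub_left k (2*c)
    have h2 : (2*c - c) = c := by ring
    rw [h1, h2, intervalIntegral.integral_symm]
    congr 1
    rw [neg_pow, (by norm_num : ((-1:ℝ))^2 = 1), one_mul]
    congr 2
    ring
  calc ∫⁻ x in Ioo c (2*c-a),
        ENNReal.ofReal ((∫ τ in c..(2*c - x), k τ)^2 * Real.exp (-(2*m*((2*c-x)-c)^2)))
      = ∫⁻ x in Ioo c (2*c-a),
        ENNReal.ofReal ((∫ τ in c..x, k (2*c - τ))^2 * Real.exp (-(2*m*(x-c)^2))) :=
        lintegral_congr fun x => hLcong x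
    _ ≤ ENNReal.ofReal (Real.sqrt π / m) * ∫⁻ τ in Ioo c (2*c-a),
        ENNReal.ofReal ((k (2*c - τ))^2 * Real.exp (-(2*m*(τ-c)^2))) :=
        oneD hm c (2*c-a) hk'
    _ = ENNReal.ofReal (Real.sqrt π / m) * ∫⁻ x in Ioo c (2*c-a),
        ENNReal.ofReal ((k (2*c - x))^2 * Real.exp (-(2*m*((2*c-x)-c)^2))) := by
        congr 1
        refine lintegral_congr fun x => ?_
        congr 3
        ring

lemma oneD_full {m : ℝ} (hm : 0 < m) {T : ℝ} (hT : 0 < T) {k : ℝ → ℝ} (hk : Measurable k) :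
    ∫⁻ t in Ioo 0 T, ENNReal.ofReal ((∫ τ in (T/2)..t, k τ)^2 * Real.exp (-(2*m*(t-T/2)^2)))
      ≤ ENNReal.ofReal (Real.sqrt π / m) *
        ∫⁻ τ in Ioo 0 T, ENNReal.ofReal ((k τ)^2 * Real.exp (-(2*m*(τ-T/2)^2))) := by
  set c := T/2 with hc
  have hsplit : Ioo (0:ℝ) T = Ioc 0 c ∪ Ioo c T := by
    rw [Set.Ioc_union_Ioo_eq_Ioo (by rw [hc]; linarith) (by rw [hc]; linarith)]
  have hdisj : Disjoint (Ioc (0:ℝ) c) (Ioo c T) :=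
    disjoint_left.2 fun x hx1 hx2 => absurd hx2.1 (not_lt.2 hx1.2)
  have hIoc : volume.restrict (Ioc (0:ℝ) c) = volume.restrict (Ioo (0:ℝ) c) :=
    Measure.restrict_congr_set Ioo_ae_eq_Ioc.symm
  have hu : ∀ f : ℝ → ℝ≥0∞, ∫⁻ t in Ioo (0:ℝ) T, f t
      = (∫⁻ t in Ioo (0:ℝ) c, f t) + ∫⁻ t in Ioo c T, f t := by
    intro f
    rw [hsplit, lintegral_union measurableSet_Ioo hdisj, hIoc]
  rw [hu, hu, mul_add]
  exact add_le_add (oneD_left hm 0 c hk) (oneD hm c T hk)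



end L33


open L33 in
/-- Lemma 3.3: the weighted L² norm of the Volterra integral from the midpoint
T/2 gains a factor 1/λ, with the Carleman weight
φ_λ(x₁,t) = exp(2λ(x₁² − α(t−T/2)²)); the constant C₁ depends only on α. -/
theorem lemma_3_3 (α : ℝ) (hα : 0 < α) :
    ∃ C > 0, ∀ (n : ℕ) (Ω : Set (Fin (n + 1) → ℝ)), Bornology.IsBounded Ω →
      ∀ T : ℝ, 0 < T →
      ∀ (h : (Fin (n + 1) → ℝ) × ℝ → ℝ),
        MemLp h 2 (volume.restrict (Ω ×ˢ Set.Ioo 0 T)) →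
      ∀ l : ℝ, 0 < l →
        (∫ p in Ω ×ˢ Set.Ioo 0 T,
            (∫ τ in (T / 2)..p.2, h (p.1, τ)) ^ 2
              * Real.exp (2 * l * ((p.1 0) ^ 2 - α * (p.2 - T / 2) ^ 2)))
        ≤ (C / l) * ∫ p in Ω ×ˢ Set.Ioo 0 T,
            (h p) ^ 2 * Real.exp (2 * l * ((p.1 0) ^ 2 - α * (p.2 - T / 2) ^ 2)) := by
  have hpi : 0 < Real.sqrt π := Real.sqrt_pos.2 Real.pi_pos
  refine ⟨Real.sqrt π / α, by positivity, ?_⟩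
  intro n Ω hΩ T hT h hmem l hl
  set S : Set ((Fin (n + 1) → ℝ) × ℝ) := Ω ×ˢ Set.Ioo 0 T with hS
  set μ : Measure ((Fin (n + 1) → ℝ) × ℝ) := volume.restrict S with hμ
  set μΩ : Measure (Fin (n + 1) → ℝ) := volume.restrict Ω with hμΩ
  set μT : Measure ℝ := volume.restrict (Set.Ioo 0 T) with hμT
  set m : ℝ := l * α with hmdef
  have hm : 0 < m := by positivity
  set φ : (Fin (n + 1) → ℝ) × ℝ → ℝ :=
    fun p => Real.exp (2 * l * ((p.1 0) ^ 2 - α * (p.2 - T / 2) ^ 2)) with hφ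
  have hφc : Continuous φ := by
    apply Real.continuous_exp.comp
    fun_prop
  have hprod : μ = μΩ.prod μT := by
    rw [hμ, hμΩ, hμT, hS, Measure.volume_eq_prod, Measure.prod_restrict]
  -- measurable representative
  set g : (Fin (n + 1) → ℝ) × ℝ → ℝ := hmem.aestronglyMeasurable.mk h with hgdef
  have hgsm : StronglyMeasurable g := hmem.aestronglyMeasurable.stronglyMeasurable_mk
  have hg : Measurable g := hgsm.measurable
  have hae : h =ᵐ[μ] g := hmem.aestronglyMeasurable.ae_eq_mk
  -- nonnegativity of RHS
  have hRnn : 0 ≤ ∫ p in S, (h p) ^ 2 * φ p := integral_nonneg fun p => by positivity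
  -- integrability of the RHS integrand
  have hRint : Integrable (fun p => (h p) ^ 2 * φ p) μ := by
    obtain ⟨R, hR⟩ := isBounded_iff_forall_norm_le.1 hΩ
    have hsub : S ⊆ {p : (Fin (n + 1) → ℝ) × ℝ | |p.1 0| ≤ R} := by
      rintro ⟨x, t⟩ ⟨hx, -⟩
      exact (norm_le_pi_norm x 0).trans (hR x hx)
    have hnull : μ {p : (Fin (n + 1) → ℝ) × ℝ | |p.1 0| ≤ R}ᶜ = 0 := by
      have hms : MeasurableSet {p : (Fin (n + 1) → ℝ) × ℝ | |p.1 0| ≤ R} :=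
        measurableSet_le (by fun_prop) measurable_const
      rw [hμ, Measure.restrict_apply hms.compl]
      have : {p : (Fin (n + 1) → ℝ) × ℝ | |p.1 0| ≤ R}ᶜ ∩ S = ∅ := by
        rw [Set.eq_empty_iff_forall_notMem]
        rintro p ⟨hpc, hpS⟩
        exact hpc (hsub hpS)
      rw [this, measure_empty]
    have hbdd : ∀ᵐ p ∂μ, ‖φ p‖ ≤ Real.exp (2 * l * R ^ 2) := by
      have hmem' : ∀ᵐ p ∂μ, p ∈ {p : (Fin (n + 1) → ℝ) × ℝ | |p.1 0| ≤ R} := by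
        rw [ae_iff]
        exact hnull
      filter_upwards [hmem'] with p hp
      have hnorm : ‖φ p‖ = φ p := by
        rw [Real.norm_eq_abs]; exact abs_of_pos (Real.exp_pos _)
      rw [hnorm]
      simp only [hφ]
      apply Real.exp_le_exp.2
      have h1 : (p.1 0) ^ 2 ≤ R ^ 2 := sq_le_sq' (neg_le_of_abs_le hp) (le_of_abs_le hp)
      nlinarith [sq_nonneg (p.2 - T / 2), hl.le]
    have h2 : Integrable (fun p => (h p) ^ 2) μ := hmem.integrable_sq
    have := h2.bdd_mul (hφc.aestronglyMeasurable) hbdd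
    exact this.congr (ae_of_all _ fun p => mul_comm _ _)
  have hRof : ENNReal.ofReal (∫ p in S, (h p) ^ 2 * φ p)
      = ∫⁻ p, ENNReal.ofReal ((h p) ^ 2 * φ p) ∂μ :=
    ofReal_integral_eq_lintegral_ofReal hRint (ae_of_all _ fun p => by positivity)
  -- measurability of the Volterra integral
  have hIV : Measurable fun p : (Fin (n + 1) → ℝ) × ℝ => ∫ τ in (T/2)..p.2, g (p.1, τ) := by
    have hfun : (fun p : (Fin (n + 1) → ℝ) × ℝ => ∫ τ in (T/2)..p.2, g (p.1, τ))
        = fun p => (∫ τ, (Ioc (T/2) p.2).indicator (fun τ => g (p.1, τ)) τ)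
            - (∫ τ, (Ioc p.2 (T/2)).indicator (fun τ => g (p.1, τ)) τ) := by
      funext p
      rcases le_total (T/2) p.2 with hle | hle
      · rw [intervalIntegral.integral_of_le hle, ← integral_indicator measurableSet_Ioc,
          Set.Ioc_eq_empty (not_lt.2 hle)]
        simp
      · rw [intervalIntegral.integral_of_ge hle, ← integral_indicator measurableSet_Ioc,
          Set.Ioc_eq_empty (not_lt.2 hle)]
        simp
    rw [hfun]
    have hind : ∀ c' : ℝ, ∀ swap : Bool, True := fun _ _ => trivial
    have mk1 : StronglyMeasurable fun q : ((Fin (n + 1) → ℝ) × ℝ) × ℝ =>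
        (Ioc (T/2) q.1.2).indicator (fun τ => g (q.1.1, τ)) q.2 := by
      apply Measurable.stronglyMeasurable
      have : (fun q : ((Fin (n + 1) → ℝ) × ℝ) × ℝ => (Ioc (T/2) q.1.2).indicator (fun τ => g (q.1.1, τ)) q.2)
          = fun q : ((Fin (n + 1) → ℝ) × ℝ) × ℝ =>
              if T/2 < q.2 ∧ q.2 ≤ q.1.2 then g (q.1.1, q.2) else 0 := by
        funext q; simp [Set.indicator_apply, Set.mem_Ioc]
      rw [this]
      apply Measurable.ite
      · exact (measurableSet_lt measurable_const measurable_snd).inter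
          (measurableSet_le measurable_snd (measurable_fst.snd))
      · exact hg.comp (by fun_prop)
      · exact measurable_const
    have mk2 : StronglyMeasurable fun q : ((Fin (n + 1) → ℝ) × ℝ) × ℝ =>
        (Ioc q.1.2 (T/2)).indicator (fun τ => g (q.1.1, τ)) q.2 := by
      apply Measurable.stronglyMeasurable
      have : (fun q : ((Fin (n + 1) → ℝ) × ℝ) × ℝ => (Ioc q.1.2 (T/2)).indicator (fun τ => g (q.1.1, τ)) q.2)
          = fun q : ((Fin (n + 1) → ℝ) × ℝ) × ℝ =>
              if q.1.2 < q.2 ∧ q.2 ≤ T/2 then g (q.1.1, q.2) else 0 := by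
        funext q; simp [Set.indicator_apply, Set.mem_Ioc]
      rw [this]
      apply Measurable.ite
      · exact (measurableSet_lt (measurable_fst.snd) measurable_snd).inter
          (measurableSet_le measurable_snd measurable_const)
      · exact hg.comp (by fun_prop)
      · exact measurable_const
    exact (mk1.integral_prod_right'.measurable).sub (mk2.integral_prod_right'.measurable)
  -- a.e. equality of LHS integrands
  have hae' : h =ᵐ[μΩ.prod μT] g := hprod ▸ hae
  have hslice : ∀ᵐ x ∂μΩ, ∀ᵐ τ ∂μT, h (x, τ) = g (x, τ) := Measure.ae_ae_of_ae_prod hae'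
  have hLae : (fun p : (Fin (n + 1) → ℝ) × ℝ => ENNReal.ofReal ((∫ τ in (T/2)..p.2, h (p.1, τ)) ^ 2 * φ p))
      =ᵐ[μΩ.prod μT]
      (fun p : (Fin (n + 1) → ℝ) × ℝ => ENNReal.ofReal ((∫ τ in (T/2)..p.2, g (p.1, τ)) ^ 2 * φ p)) := by
    set B : Set (Fin (n + 1) → ℝ) := {x | ¬ ∀ᵐ τ ∂μT, h (x, τ) = g (x, τ)} with hB
    have hBnull : μΩ B = 0 := hslice
    rw [Filter.eventuallyEq_iff_exists_mem]
    refine ⟨(B ×ˢ (univ : Set ℝ) ∪ (univ : Set (Fin (n + 1) → ℝ)) ×ˢ (Ioo (0:ℝ) T)ᶜ)ᶜ, ?_, ?_⟩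
    · rw [mem_ae_iff, compl_compl]
      apply measure_union_null
      · apply measure_mono_null (Set.prod_mono (subset_toMeasurable μΩ B) le_rfl)
        rw [Measure.prod_prod, measure_toMeasurable, hBnull, zero_mul]
      · rw [Measure.prod_prod]
        have : μT (Ioo (0:ℝ) T)ᶜ = 0 := by
          rw [hμT, Measure.restrict_apply measurableSet_Ioo.compl,
            Set.compl_inter_self, measure_empty]
        rw [this, mul_zero]
    · rintro ⟨x, t⟩ hp
      simp only [Set.mem_compl_iff, Set.mem_union, Set.mem_prod, Set.mem_univ, not_or,
        and_true, true_and, not_and, Set.notMem_compl_iff] at hp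
      obtain ⟨hxB, htT⟩ := hp
      rw [not_not] at htT
      rw [hB, Set.mem_setOf_eq, not_not] at hxB
      have hintcongr : ∫ τ in (T/2)..t, h (x, τ) = ∫ τ in (T/2)..t, g (x, τ) := by
        apply intervalIntegral.integral_congr_ae
        have htT1 : 0 < t := htT.1
        have htT2 : t < T := htT.2
        have hmemIoo : ∀ τ, τ ∈ Set.uIoc (T/2) t → τ ∈ Ioo (0:ℝ) T := by
          intro τ hτ
          rcases Set.mem_uIoc.1 hτ with ⟨h1, h2⟩ | ⟨h1, h2⟩ <;>
            exact Set.mem_Ioo.2 ⟨by linarith, by linarith⟩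
        have := (ae_restrict_iff' measurableSet_Ioo).1 hxB
        filter_upwards [this] with τ hτ hmem
        exact hτ (hmemIoo τ hmem)
      dsimp only
      rw [hintcongr]
  -- a.e. equality of RHS integrands
  have hRae : (fun p : (Fin (n + 1) → ℝ) × ℝ => ENNReal.ofReal ((h p) ^ 2 * φ p))
      =ᵐ[μΩ.prod μT] (fun p => ENNReal.ofReal ((g p) ^ 2 * φ p)) :=
    (hprod ▸ hae : h =ᵐ[μΩ.prod μT] g).mono fun p hp => by dsimp only; rw [hp]
  -- key lintegral inequality for the measurable representative
  have hmeasL : Measurable fun p : (Fin (n + 1) → ℝ) × ℝ =>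
      ENNReal.ofReal ((∫ τ in (T/2)..p.2, g (p.1, τ)) ^ 2 * φ p) :=
    ((hIV.pow_const 2).mul hφc.measurable).ennreal_ofReal
  have hmeasR : Measurable fun p : (Fin (n + 1) → ℝ) × ℝ =>
      ENNReal.ofReal ((g p) ^ 2 * φ p) :=
    ((hg.pow_const 2).mul hφc.measurable).ennreal_ofReal
  have KEY : ∫⁻ p, ENNReal.ofReal ((∫ τ in (T/2)..p.2, g (p.1, τ)) ^ 2 * φ p) ∂(μΩ.prod μT)
      ≤ ENNReal.ofReal (Real.sqrt π / m) *
        ∫⁻ p, ENNReal.ofReal ((g p) ^ 2 * φ p) ∂(μΩ.prod μT) := by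
    rw [lintegral_prod _ hmeasL.aemeasurable, lintegral_prod _ hmeasR.aemeasurable,
      ← lintegral_const_mul' _ _ ENNReal.ofReal_ne_top]
    apply lintegral_mono
    intro x
    have hsplitφ : ∀ t : ℝ, φ (x, t)
        = Real.exp (2*l*(x 0)^2) * Real.exp (-(2*m*(t - T/2)^2)) := by
      intro t
      simp only [hφ]
      rw [← Real.exp_add]
      congr 1
      rw [hmdef]
      ring
    calc ∫⁻ t, ENNReal.ofReal ((∫ τ in (T/2)..t, g (x, τ)) ^ 2 * φ (x, t)) ∂μT
        = ∫⁻ t, ENNReal.ofReal (Real.exp (2*l*(x 0)^2)) *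
            ENNReal.ofReal ((∫ τ in (T/2)..t, g (x, τ)) ^ 2 * Real.exp (-(2*m*(t - T/2)^2))) ∂μT := by
          refine lintegral_congr fun t => ?_
          rw [hsplitφ t, ← ENNReal.ofReal_mul (Real.exp_pos _).le]
          congr 1
          ring
      _ = ENNReal.ofReal (Real.exp (2*l*(x 0)^2)) *
            ∫⁻ t, ENNReal.ofReal
              ((∫ τ in (T/2)..t, g (x, τ)) ^ 2 * Real.exp (-(2*m*(t - T/2)^2))) ∂μT :=
          lintegral_const_mul' _ _ ENNReal.ofReal_ne_top
      _ ≤ ENNReal.ofReal (Real.exp (2*l*(x 0)^2)) *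
            (ENNReal.ofReal (Real.sqrt π / m) *
              ∫⁻ τ, ENNReal.ofReal ((g (x, τ)) ^ 2 * Real.exp (-(2*m*(τ - T/2)^2))) ∂μT) :=
          mul_le_mul_right (oneD_full hm hT (hg.comp measurable_prodMk_left)) _
      _ = ENNReal.ofReal (Real.sqrt π / m) *
            ∫⁻ τ, ENNReal.ofReal ((g (x, τ)) ^ 2 * φ (x, τ)) ∂μT := by
          rw [← mul_assoc, mul_comm (ENNReal.ofReal (Real.exp (2*l*(x 0)^2))), mul_assoc]
          congr 1
          rw [← lintegral_const_mul' _ _ ENNReal.ofReal_ne_top]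
          refine lintegral_congr fun τ => ?_
          rw [hsplitφ τ, ← ENNReal.ofReal_mul (Real.exp_pos _).le]
          congr 1
          ring
  -- conclusion
  have hconst : Real.sqrt π / m = Real.sqrt π / α / l := by
    rw [hmdef, div_div]
    ring_nf
  show (∫ p in S, (∫ τ in (T/2)..p.2, h (p.1, τ)) ^ 2 * φ p)
      ≤ (Real.sqrt π / α / l) * ∫ p in S, (h p) ^ 2 * φ p
  by_cases hLint : Integrable (fun p => (∫ τ in (T/2)..p.2, h (p.1, τ)) ^ 2 * φ p) μ
  · have hL1 : ENNReal.ofReal (∫ p in S, (∫ τ in (T/2)..p.2, h (p.1, τ)) ^ 2 * φ p)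
        = ∫⁻ p, ENNReal.ofReal ((∫ τ in (T/2)..p.2, h (p.1, τ)) ^ 2 * φ p) ∂μ :=
      ofReal_integral_eq_lintegral_ofReal hLint (ae_of_all _ fun p => by positivity)
    have chain : ENNReal.ofReal (∫ p in S, (∫ τ in (T/2)..p.2, h (p.1, τ)) ^ 2 * φ p)
        ≤ ENNReal.ofReal ((Real.sqrt π / α / l) * ∫ p in S, (h p) ^ 2 * φ p) := by
      rw [hL1, hprod]
      calc ∫⁻ p, ENNReal.ofReal ((∫ τ in (T/2)..p.2, h (p.1, τ)) ^ 2 * φ p) ∂(μΩ.prod μT)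
          = ∫⁻ p, ENNReal.ofReal ((∫ τ in (T/2)..p.2, g (p.1, τ)) ^ 2 * φ p) ∂(μΩ.prod μT) :=
            lintegral_congr_ae hLae
        _ ≤ ENNReal.ofReal (Real.sqrt π / m) *
              ∫⁻ p, ENNReal.ofReal ((g p) ^ 2 * φ p) ∂(μΩ.prod μT) := KEY
        _ = ENNReal.ofReal (Real.sqrt π / m) *
              ∫⁻ p, ENNReal.ofReal ((h p) ^ 2 * φ p) ∂(μΩ.prod μT) := by
            rw [lintegral_congr_ae hRae]
        _ = ENNReal.ofReal (Real.sqrt π / m) *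
              ENNReal.ofReal (∫ p in S, (h p) ^ 2 * φ p) := by
            rw [← hprod, ← hRof]
        _ = ENNReal.ofReal ((Real.sqrt π / α / l) * ∫ p in S, (h p) ^ 2 * φ p) := by
            rw [← ENNReal.ofReal_mul (by positivity), hconst]
    exact (ENNReal.ofReal_le_ofReal_iff
      (mul_nonneg (by positivity) hRnn)).1 chain
  · rw [integral_undef hLint]
    exact mul_nonneg (by positivity) hRnn
end
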